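/- arXiv:2404.16796 — 7 statements merged into one kernel-verified Lean document; each statement's English description precedes it below -/
import Mathlib

section
/- Let K be a field and let f, g ∈ K[x₁,…,xₙ] be nonzero polynomials. Define the Newton polytope New(f) as the convex hull in ℝⁿ of the support of f. Then New(f·g) = New(f) + New(g), where + denotes Minkowski sum. -/
/-!
`New(fg) ⊆ New(f) + New(g)` because every monomial of `fg` is a product of monomials of `f` and
`g`. Conversely, `New(f) + New(g)` is the convex hull of the finite set `supp f + supp g`, so by
Krein–Milman it is spanned by its extreme points. An extreme point `a + b` of a Minkowski sum
decomposes uniquely (if also `a + b = a' + b'`, it is the midpoint of `a' + b` and `a + b'`), so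
the coefficient of `x^(a+b)` in `fg` is the single product `f_a g_b ≠ 0`.
-/

open MvPolynomial Pointwise

/-- The Newton polytope of a polynomial: the convex hull of its support in ℝⁿ. -/
noncomputable def newtonPolytope {K : Type*} [Field K] {n : ℕ}
    (f : MvPolynomial (Fin n) K) : Set (Fin n → ℝ) :=
  convexHull ℝ ((fun α : Fin n →₀ ℕ => fun i => (α i : ℝ)) '' (f.support : Set (Fin n →₀ ℕ)))

theorem UniqueAdd.of_add_mem_extremePoints {𝕜 E : Type*} [Field 𝕜] [LinearOrder 𝕜]
    [IsStrictOrderedRing 𝕜] [AddCommGroup E] [Module 𝕜 E] {A B : Finset E} {a b : E}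
    (ha : a ∈ A) (hb : b ∈ B) (h : a + b ∈ (↑A + ↑B : Set E).extremePoints 𝕜) :
    UniqueAdd A B a b := by
  intro a' b' ha' hb' hab
  have hmid : a + b ∈ segment 𝕜 (a' + b) (a + b') := by
    refine ⟨1 / 2, 1 / 2, by norm_num, by norm_num, by norm_num, ?_⟩
    linear_combination (norm := module) (1 / 2 : 𝕜) • hab
  rcases (mem_extremePoints_iff_forall_segment.1 h).2 _ (Set.add_mem_add ha' hb) _
    (Set.add_mem_add ha hb') hmid with h | h
  · obtain rfl := add_right_cancel h
    exact ⟨rfl, add_left_cancel hab⟩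
  · obtain rfl := add_left_cancel h
    exact ⟨add_right_cancel hab, rfl⟩

theorem Set.Finite.convexHull_eq_of_extremePoints_subset {E : Type*} [AddCommGroup E]
    [Module ℝ E] [TopologicalSpace E] [T2Space E] [IsTopologicalAddGroup E] [ContinuousSMul ℝ E]
    [LocallyConvexSpace ℝ E] {S T : Set E} (hS : S.Finite) (hTS : T ⊆ S)
    (hext : (convexHull ℝ S).extremePoints ℝ ⊆ T) : convexHull ℝ T = convexHull ℝ S := by
  refine (convexHull_mono hTS).antisymm ?_
  calc convexHull ℝ S
      = closure (convexHull ℝ ((convexHull ℝ S).extremePoints ℝ)) :=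
        (closure_convexHull_extremePoints (hS.isCompact_convexHull ℝ) (convex_convexHull ℝ S)).symm
    _ ⊆ closure (convexHull ℝ T) := closure_mono (convexHull_mono hext)
    _ = convexHull ℝ T := ((hS.subset hTS).isCompact_convexHull ℝ).isClosed.closure_eq

theorem MvPolynomial.add_mem_support_mul_of_uniqueAdd {σ R : Type*} [CommSemiring R]
    [NoZeroDivisors R] {p q : MvPolynomial σ R} {a b : σ →₀ ℕ} (ha : a ∈ p.support)
    (hb : b ∈ q.support) (h : UniqueAdd p.support q.support a b) : a + b ∈ (p * q).support := by
  rw [mem_support_iff] at *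
  rw [coeff, AddMonoidAlgebra.coeff_mul_add_of_uniqueAdd h]
  exact mul_ne_zero ha hb

theorem MvPolynomial.convexHull_image_support_mul {σ R E : Type*} [CommSemiring R]
    [NoZeroDivisors R] [AddCommGroup E] [Module ℝ E] [TopologicalSpace E] [T2Space E]
    [IsTopologicalAddGroup E] [ContinuousSMul ℝ E] [LocallyConvexSpace ℝ E]
    (φ : (σ →₀ ℕ) →+ E) (hφ : Function.Injective φ) (p q : MvPolynomial σ R) :
    convexHull ℝ (φ '' (p * q).support) =
      convexHull ℝ (φ '' p.support) + convexHull ℝ (φ '' q.support) := by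
  classical
  rw [← convexHull_add, ← Set.image_add, ← Finset.coe_add]
  refine (Finset.finite_toSet _ |>.image φ).convexHull_eq_of_extremePoints_subset
    (Set.image_mono (Finset.coe_subset.2 (support_mul p q))) fun x hx ↦ ?_
  obtain ⟨_, hab, rfl⟩ := extremePoints_convexHull_subset hx
  obtain ⟨a, ha, b, hb, rfl⟩ := Finset.mem_add.1 hab
  refine ⟨a + b, add_mem_support_mul_of_uniqueAdd ha hb ?_, rfl⟩
  rw [← UniqueAdd.addHom_image_iff φ.toAddHom hφ]
  refine .of_add_mem_extremePoints (𝕜 := ℝ) (Finset.mem_image_of_mem _ ha)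
    (Finset.mem_image_of_mem _ hb) ?_
  have hx' := inter_extremePoints_subset_extremePoints_of_subset (subset_convexHull ℝ _)
    ⟨extremePoints_convexHull_subset hx, hx⟩
  simpa [Finset.coe_image, Set.image_add] using hx'

noncomputable def Finsupp.toRealFun (σ : Type*) : (σ →₀ ℕ) →+ (σ → ℝ) where
  toFun α i := α i
  map_zero' := by ext; simp
  map_add' α β := by ext; simp

theorem Finsupp.toRealFun_injective (σ : Type*) : Function.Injective (toRealFun σ) :=
  fun _ _ h ↦ Finsupp.ext fun i ↦ Nat.cast_injective (R := ℝ) (congrFun h i)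

theorem newtonPolytope_mul_general {K : Type*} [Field K] {n : ℕ}
    (f g : MvPolynomial (Fin n) K) :
    newtonPolytope (f * g) = newtonPolytope f + newtonPolytope g :=
  convexHull_image_support_mul _ (Finsupp.toRealFun_injective (Fin n)) f g

theorem newtonPolytope_mul {K : Type*} [Field K] {n : ℕ}
    (f g : MvPolynomial (Fin n) K) (hf : f ≠ 0) (hg : g ≠ 0) :
    newtonPolytope (f * g) = newtonPolytope f + newtonPolytope g :=
  newtonPolytope_mul_general f g
end

section
/- Let ≻ be a monomial (term) order on monomials of K[x₁,…,xₙ] and let F be a finite set of nonzero polynomials. Then there exists a weight vector ω ∈ ℚⁿ with all coordinates nonnegative such that for every f ∈ F, the exponent of the ≻-leading monomial of f is the unique exponent in the support of f maximizing α ↦ ⟨ω, α⟩. -/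
/-!
Collect the pairs `(α, β)` of exponents of a common support with `β ≺ α`, together with the pairs
`(eᵢ, 0)`. By Gordan's theorem of the alternative (proved by Fourier–Motzkin elimination over any
ordered field), either some `ω ∈ ℚⁿ` is positive on every difference `α - β`, which is the claim,
or `0` is a convex combination of these differences. Clearing denominators, the latter gives
`∑ mₚ βₚ = ∑ mₚ αₚ` with natural `mₚ` not all zero, whereas compatibility of `≺` with addition
gives `∑ mₚ βₚ ≺ ∑ mₚ αₚ`.
-/

open Matrix

section Gordan

variable {𝕜 ι : Type*} [Field 𝕜]

/-- The point of the segment `[p, q]` at which the `k`-th coordinate vanishes, when `p k` and `q k`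
have opposite signs. -/
def eliminateCoord (k : ι) (p q : ι → 𝕜) : ι → 𝕜 :=
  (-q k / (p k - q k)) • p + (p k / (p k - q k)) • q

@[simp]
lemma eliminateCoord_apply_self (k : ι) (p q : ι → 𝕜) : eliminateCoord k p q k = 0 := by
  simp only [eliminateCoord, Pi.add_apply, Pi.smul_apply, smul_eq_mul]
  ring

lemma eliminateCoord_dotProduct [Fintype ι] (k : ι) (p q ω : ι → 𝕜) :
    eliminateCoord k p q ⬝ᵥ ω =
      (-q k / (p k - q k)) * (p ⬝ᵥ ω) + (p k / (p k - q k)) * (q ⬝ᵥ ω) := by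
  simp only [eliminateCoord, add_dotProduct, smul_dotProduct, smul_eq_mul]

variable [LinearOrder 𝕜] [IsStrictOrderedRing 𝕜]

lemma eliminateCoord_mem_segment {k : ι} {p q : ι → 𝕜} (hp : 0 < p k) (hq : q k < 0) :
    eliminateCoord k p q ∈ segment 𝕜 p q := by
  have hpq : 0 < p k - q k := by linarith
  refine ⟨_, _, div_nonneg (by linarith) hpq.le, div_nonneg hp.le hpq.le, ?_, rfl⟩
  field_simp
  ring

variable [Fintype ι]

/-- Fourier–Motzkin step: `helim` says exactly that the lower bounds `-(p ⬝ᵥ ω) / p k` on the new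
`k`-th coordinate stay below the upper bounds `-(q ⬝ᵥ ω) / q k`. -/
lemma exists_dotProduct_pos_of_eliminateCoord [DecidableEq ι] (k : ι) (S : Finset (ι → 𝕜))
    (ω : ι → 𝕜) (hzero : ∀ v ∈ S, v k = 0 → 0 < v ⬝ᵥ ω)
    (helim : ∀ p ∈ S, ∀ q ∈ S, 0 < p k → q k < 0 → 0 < eliminateCoord k p q ⬝ᵥ ω) :
    ∃ ω' : ι → 𝕜, ∀ v ∈ S, 0 < v ⬝ᵥ ω' := by
  let bound : (ι → 𝕜) → 𝕜 := fun v => -(v ⬝ᵥ ω) / v k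
  obtain ⟨t, hlo, hhi⟩ := Order.exists_between_finsets ((S.filter (0 < · k)).image bound)
    ((S.filter (· k < 0)).image bound) (by
      simp only [Finset.mem_image, Finset.mem_filter]
      rintro _ ⟨p, ⟨hpS, hp⟩, rfl⟩ _ ⟨q, ⟨hqS, hq⟩, rfl⟩
      have h := helim p hpS q hqS hp hq
      rw [eliminateCoord_dotProduct, div_mul_eq_mul_div, div_mul_eq_mul_div, ← add_div,
        lt_div_iff₀ (by linarith), zero_mul] at h
      simp only [bound]
      rw [div_lt_iff₀ hp, div_mul_eq_mul_div, lt_div_iff_of_neg hq]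
      nlinarith)
  refine ⟨ω + Pi.single k t, fun v hv => ?_⟩
  rw [dotProduct_add, dotProduct_single]
  rcases lt_trichotomy (v k) 0 with hv0 | hv0 | hv0
  · have := hhi _ (Finset.mem_image_of_mem bound (Finset.mem_filter.mpr ⟨hv, hv0⟩))
    rw [lt_div_iff_of_neg hv0] at this
    linarith
  · simpa [hv0] using hzero v hv hv0
  · have := hlo _ (Finset.mem_image_of_mem bound (Finset.mem_filter.mpr ⟨hv, hv0⟩))
    rw [div_lt_iff₀ hv0] at this
    linarith

lemma exists_dotProduct_pos_or_zero_mem_convexHull_of_support_subset [DecidableEq ι]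
    (J : Finset ι) (S : Finset (ι → 𝕜)) (hS : ∀ v ∈ S, ∀ j ∉ J, v j = 0) :
    (∃ ω : ι → 𝕜, ∀ v ∈ S, 0 < v ⬝ᵥ ω) ∨ (0 : ι → 𝕜) ∈ convexHull 𝕜 (S : Set (ι → 𝕜)) := by
  induction J using Finset.induction_on generalizing S with
  | empty =>
    rcases S.eq_empty_or_nonempty with rfl | ⟨v, hv⟩
    · exact Or.inl ⟨0, by simp⟩
    · obtain rfl : v = 0 := funext fun j => hS v hv j (Finset.notMem_empty j)
      exact Or.inr (subset_convexHull 𝕜 _ hv)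
  | insert k J _ IH =>
    let S' := S.filter (· k = 0) ∪
      ((S.filter (0 < · k)) ×ˢ (S.filter (· k < 0))).image fun pq => eliminateCoord k pq.1 pq.2
    have hS'S : (S' : Set (ι → 𝕜)) ⊆ convexHull 𝕜 S := by
      intro v hv
      simp only [S', Finset.coe_union, Finset.coe_image, Finset.coe_filter, Finset.coe_product,
        Set.mem_union, Set.mem_image, Set.mem_prod] at hv
      rcases hv with ⟨hv, -⟩ | ⟨⟨p, q⟩, ⟨⟨hpS, hp⟩, hqS, hq⟩, rfl⟩
      · exact subset_convexHull 𝕜 _ hv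
      · exact segment_subset_convexHull hpS hqS (eliminateCoord_mem_segment hp hq)
    have hS'J : ∀ v ∈ S', ∀ j ∉ J, v j = 0 := by
      intro v hv j hj
      simp only [S', Finset.mem_union, Finset.mem_filter, Finset.mem_image,
        Finset.mem_product] at hv
      rcases eq_or_ne j k with rfl | hjk
      · rcases hv with ⟨-, hv⟩ | ⟨pq, -, rfl⟩
        exacts [hv, eliminateCoord_apply_self _ _ _]
      · have hj' : j ∉ insert k J := by simp [hjk, hj]
        rcases hv with ⟨hv, -⟩ | ⟨⟨p, q⟩, ⟨⟨hpS, -⟩, hqS, -⟩, rfl⟩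
        · exact hS v hv j hj'
        · simp [eliminateCoord, hS p hpS j hj', hS q hqS j hj']
    rcases IH S' hS'J with ⟨ω, hω⟩ | h0
    · refine Or.inl (exists_dotProduct_pos_of_eliminateCoord k S ω
        (fun v hv hvk => hω v ?_) fun p hp q hq hpk hqk => hω _ ?_)
      · simp [S', hv, hvk]
      · simp only [S', Finset.mem_union, Finset.mem_image, Finset.mem_product, Finset.mem_filter]
        exact Or.inr ⟨(p, q), ⟨⟨hp, hpk⟩, hq, hqk⟩, rfl⟩
    · exact Or.inr (convexHull_min hS'S (convex_convexHull 𝕜 _) h0)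

theorem exists_dotProduct_pos_or_zero_mem_convexHull (S : Finset (ι → 𝕜)) :
    (∃ ω : ι → 𝕜, ∀ v ∈ S, 0 < v ⬝ᵥ ω) ∨ (0 : ι → 𝕜) ∈ convexHull 𝕜 (S : Set (ι → 𝕜)) := by
  classical
  exact exists_dotProduct_pos_or_zero_mem_convexHull_of_support_subset Finset.univ S
    fun _ _ j hj => absurd (Finset.mem_univ j) hj

end Gordan

section AddCompatibleRel

variable {M ι : Type*} [AddCommMonoid M] {r : M → M → Prop}

lemma rel_sum_of_nonempty (htrans : ∀ a b c, r a b → r b c → r a c)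
    (hadd : ∀ a b c, r a b → r (a + c) (b + c)) {s : Finset ι} (hs : s.Nonempty) {f g : ι → M}
    (h : ∀ i ∈ s, r (f i) (g i)) : r (∑ i ∈ s, f i) (∑ i ∈ s, g i) := by
  induction hs using Finset.Nonempty.cons_induction with
  | singleton i => simpa using h i (Finset.mem_singleton_self i)
  | cons i s hi _ IH =>
    simp only [Finset.sum_cons]
    refine htrans _ (g i + ∑ j ∈ s, f j) _ (hadd _ _ _ (h i (Finset.mem_cons_self i s))) ?_
    rw [add_comm (g i), add_comm (g i)]
    exact hadd _ _ _ (IH fun j hj => h j (Finset.mem_cons_of_mem hj))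

lemma rel_sum_nsmul (htrans : ∀ a b c, r a b → r b c → r a c)
    (hadd : ∀ a b c, r a b → r (a + c) (b + c)) {s : Finset ι} {m : ι → ℕ} (hm : ∃ i ∈ s, m i ≠ 0)
    {f g : ι → M} (h : ∀ i ∈ s, r (f i) (g i)) :
    r (∑ i ∈ s, m i • f i) (∑ i ∈ s, m i • g i) := by
  have hsum (u : ι → M) :
      ∑ i ∈ s, m i • u i = ∑ x ∈ s.sigma fun i => Finset.range (m i), u x.1 := by
    simp [Finset.sum_sigma]
  rw [hsum, hsum]
  obtain ⟨i, hi, hmi⟩ := hm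
  refine rel_sum_of_nonempty htrans hadd ⟨⟨i, 0⟩, by simp [hi, Nat.pos_of_ne_zero hmi]⟩ ?_
  exact fun x hx => h x.1 (Finset.mem_sigma.mp hx).1

end AddCompatibleRel

lemma Finset.exists_nat_eq_mul_of_nonneg {X : Type*} (s : Finset X) (w : X → ℚ)
    (hw : ∀ x ∈ s, 0 ≤ w x) : ∃ D : ℕ, 0 < D ∧ ∃ m : X → ℕ, ∀ x ∈ s, (m x : ℚ) = D * w x := by
  classical
  refine ⟨∏ x ∈ s, (w x).den, Finset.prod_pos fun x _ => (w x).pos,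
    fun x => (∏ y ∈ s.erase x, (w y).den) * (w x).num.toNat, fun x hx => ?_⟩
  have hnum : (((w x).num.toNat : ℤ) : ℚ) = (w x).num :=
    congrArg _ (Int.toNat_of_nonneg (Rat.num_nonneg.mpr (hw x hx)))
  push_cast at hnum ⊢
  rw [hnum, ← Finset.prod_erase_mul s _ hx, mul_assoc, ← Rat.den_mul_eq_num]

def exponentDiff {σ : Type*} (q : (σ →₀ ℕ) × (σ →₀ ℕ)) : σ → ℚ := fun i => (q.1 i : ℚ) - q.2 i

lemma zero_notMem_convexHull_exponentDiff {σ : Type*} [DecidableEq (σ → ℚ)]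
    {r : (σ →₀ ℕ) → (σ →₀ ℕ) → Prop} (hirr : ∀ a, ¬ r a a) (htrans : ∀ a b c, r a b → r b c → r a c)
    (hadd : ∀ a b c, r a b → r (a + c) (b + c)) {P : Finset ((σ →₀ ℕ) × (σ →₀ ℕ))}
    (hP : ∀ q ∈ P, r q.2 q.1) :
    (0 : σ → ℚ) ∉ convexHull ℚ (P.image exponentDiff : Set (σ → ℚ)) := by
  rw [Finset.mem_convexHull']
  rintro ⟨w, hw0, hw1, hsum⟩
  have hpair : ∀ v ∈ P.image exponentDiff, ∃ q ∈ P, exponentDiff q = v :=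
    fun v hv => Finset.mem_image.mp hv
  choose! q hqP hqv using hpair
  obtain ⟨D, hD, m, hm⟩ := Finset.exists_nat_eq_mul_of_nonneg _ w hw0
  have hm0 : ∃ v ∈ P.image exponentDiff, m v ≠ 0 := by
    obtain ⟨v, hv, hwv⟩ := Finset.exists_ne_zero_of_sum_ne_zero (hw1.trans_ne one_ne_zero)
    refine ⟨v, hv, fun h => hwv ?_⟩
    simpa [h, hD.ne'] using hm v hv
  refine hirr (∑ v ∈ P.image exponentDiff, m v • (q v).1) ?_
  convert rel_sum_nsmul htrans hadd hm0 fun v hv => hP (q v) (hqP v hv) using 1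
  ext i
  simp only [Finsupp.finsetSum_apply, Finsupp.smul_apply, smul_eq_mul]
  apply Nat.cast_injective (R := ℚ)
  have hi := congrFun hsum i
  simp only [Finset.sum_apply, Pi.smul_apply, smul_eq_mul, Pi.zero_apply] at hi
  push_cast
  rw [← sub_eq_zero, ← Finset.sum_sub_distrib]
  calc ∑ v ∈ P.image exponentDiff, ((m v : ℚ) * (q v).1 i - m v * (q v).2 i)
      = D * ∑ v ∈ P.image exponentDiff, w v * v i := by
        rw [Finset.mul_sum]
        refine Finset.sum_congr rfl fun v hv => ?_
        rw [hm v hv, ← congrFun (hqv v hv) i, exponentDiff]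
        ring
    _ = 0 := by rw [hi, mul_zero]

open MvPolynomial

theorem exists_nonneg_rational_weight_for_finite_set_general
    {K : Type*} [Field K] {n : ℕ}
    (lt : (Fin n →₀ ℕ) → (Fin n →₀ ℕ) → Prop)
    (hirr : ∀ α, ¬ lt α α)
    (htrans : ∀ α β γ, lt α β → lt β γ → lt α γ)
    (hadd : ∀ α β γ, lt α β → lt (α + γ) (β + γ))
    (hzero : ∀ α, α ≠ 0 → lt 0 α)
    (F : Finset (MvPolynomial (Fin n) K)) :
    ∃ ω : Fin n → ℚ, (∀ i, 0 ≤ ω i) ∧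
      ∀ f ∈ F, ∀ α ∈ f.support,
        (∀ β ∈ f.support, β ≠ α → lt β α) →
        ∀ β ∈ f.support, β ≠ α →
          (∑ i, ω i * (β i : ℚ)) < ∑ i, ω i * (α i : ℚ) := by
  classical
  -- the pairs `(eᵢ, 0)` force `0 < ω i`
  let P := F.biUnion (fun f => (f.support ×ˢ f.support).filter fun q => lt q.2 q.1) ∪
    Finset.univ.image fun i => (Finsupp.single i 1, 0)
  have hP : ∀ q ∈ P, lt q.2 q.1 := by
    simp only [P, Finset.mem_union, Finset.mem_biUnion, Finset.mem_filter, Finset.mem_image]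
    rintro q (⟨f, -, -, hq⟩ | ⟨i, -, rfl⟩)
    exacts [hq, hzero _ (by simp)]
  obtain ⟨ω, hω⟩ :=
    (exists_dotProduct_pos_or_zero_mem_convexHull (P.image exponentDiff)).resolve_right
      (zero_notMem_convexHull_exponentDiff hirr htrans hadd hP)
  have hωP : ∀ q ∈ P, ∑ i, ω i * (q.2 i : ℚ) < ∑ i, ω i * (q.1 i : ℚ) := by
    intro q hq
    have := hω _ (Finset.mem_image_of_mem _ hq)
    simp only [exponentDiff, dotProduct, sub_mul, Finset.sum_sub_distrib, sub_pos] at this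
    simpa only [mul_comm (ω _)] using this
  refine ⟨ω, fun i => ?_, fun f hf α hα hmax β hβ hne => hωP (α, β) ?_⟩
  · simpa [Finsupp.single_apply] using (hωP (Finsupp.single i 1, 0) (by simp [P])).le
  · exact Finset.mem_union_left _ (Finset.mem_biUnion.mpr ⟨f, hf, by simp [hα, hβ, hmax β hβ hne]⟩)

theorem exists_nonneg_rational_weight_for_finite_set
    {K : Type*} [Field K] {n : ℕ}
    (lt : (Fin n →₀ ℕ) → (Fin n →₀ ℕ) → Prop)
    (hirr : ∀ α, ¬ lt α α)
    (htrans : ∀ α β γ, lt α β → lt β γ → lt α γ)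
    (htotal : ∀ α β, α ≠ β → lt α β ∨ lt β α)
    (hadd : ∀ α β γ, lt α β → lt (α + γ) (β + γ))
    (hzero : ∀ α, α ≠ 0 → lt 0 α)
    (F : Finset (MvPolynomial (Fin n) K)) (hF : ∀ f ∈ F, f ≠ 0) :
    ∃ ω : Fin n → ℚ, (∀ i, 0 ≤ ω i) ∧
      ∀ f ∈ F, ∀ α ∈ f.support,
        (∀ β ∈ f.support, β ≠ α → lt β α) →
        ∀ β ∈ f.support, β ≠ α →
          (∑ i, ω i * (β i : ℚ)) < ∑ i, ω i * (α i : ℚ) :=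
  exists_nonneg_rational_weight_for_finite_set_general lt hirr htrans hadd hzero F
end

section
/- Let K be a field, let ≻ be a monomial order on K[x₁,…,xₙ], and let V be a finite-dimensional K-subspace of K[x₁,…,xₙ]. Then the K-span of the set of leading monomials {LM_≻(v) : v ∈ V, v ≠ 0} has the same dimension as V. -/
open MvPolynomial

lemma exists_lt_max' {n : ℕ} (lt : (Fin n →₀ ℕ) → (Fin n →₀ ℕ) → Prop)
    (htrans : ∀ α β γ, lt α β → lt β γ → lt α γ)
    (htotal : ∀ α β, α ≠ β → lt α β ∨ lt β α)
    (s : Finset (Fin n →₀ ℕ)) (hs : s.Nonempty) :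
    ∃ α ∈ s, ∀ β ∈ s, β ≠ α → lt β α := by
  classical
  induction s using Finset.induction_on with
  | empty => simp at hs
  | @insert a s ha ih =>
    rcases s.eq_empty_or_nonempty with rfl | hs'
    · exact ⟨a, by simp, by simp⟩
    · obtain ⟨α, hα, hmax⟩ := ih hs'
      have hne : a ≠ α := fun h => ha (h ▸ hα)
      rcases htotal a α hne with h | h
      · refine ⟨α, Finset.mem_insert_of_mem hα, ?_⟩
        intro β hβ hβα
        rcases Finset.mem_insert.mp hβ with rfl | hβs
        · exact h
        · exact hmax β hβs hβα
      · refine ⟨a, Finset.mem_insert_self a s, ?_⟩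
        intro β hβ hβa
        rcases Finset.mem_insert.mp hβ with rfl | hβs
        · exact absurd rfl hβa
        · by_cases hβα : β = α
          · exact hβα ▸ h
          · exact htrans β α a (hmax β hβs hβα) h

theorem finrank_span_leading_monomials {K : Type*} [Field K] {n : ℕ}
    (lt : (Fin n →₀ ℕ) → (Fin n →₀ ℕ) → Prop)
    (hirr : ∀ α, ¬ lt α α)
    (htrans : ∀ α β γ, lt α β → lt β γ → lt α γ)
    (htotal : ∀ α β, α ≠ β → lt α β ∨ lt β α)
    (hadd : ∀ α β γ, lt α β → lt (α + γ) (β + γ))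
    (hzero : ∀ α, α ≠ 0 → lt 0 α)
    (V : Submodule K (MvPolynomial (Fin n) K)) [FiniteDimensional K V] :
    Module.finrank K (Submodule.span K
      { m : MvPolynomial (Fin n) K | ∃ v ∈ V, v ≠ 0 ∧ ∃ α ∈ v.support,
          (∀ β ∈ v.support, β ≠ α → lt β α) ∧ m = MvPolynomial.monomial α (1 : K) })
      = Module.finrank K V := by
  classical
  -- the set of leading exponents
  let E : Set (Fin n →₀ ℕ) :=
    {α | ∃ v, v ∈ V ∧ v ≠ 0 ∧ α ∈ v.support ∧ ∀ β ∈ v.support, β ≠ α → lt β α}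
  have hchoice : ∀ α : E, ∃ v, v ∈ V ∧ v ≠ 0 ∧ (α : Fin n →₀ ℕ) ∈ v.support ∧
      ∀ β ∈ v.support, β ≠ (α : Fin n →₀ ℕ) → lt β α := fun α => α.2
  choose f hfV hf0 hfs hfl using hchoice
  -- f is linearly independent
  have hli : LinearIndependent K f := by
    rw [linearIndependent_iff']
    intro s g hsum i hi
    by_contra hgi
    set t : Finset E := s.filter (fun j => g j ≠ 0) with ht
    have htne : t.Nonempty := ⟨i, Finset.mem_filter.mpr ⟨hi, hgi⟩⟩
    obtain ⟨α, hαmem, hαmax⟩ := exists_lt_max' lt htrans htotal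
      (Finset.image (fun j : E => (j : Fin n →₀ ℕ)) t) (htne.image (fun j : E => (j : Fin n →₀ ℕ)))
    obtain ⟨j0, hj0t, hj0⟩ := Finset.mem_image.mp hαmem
    have hj0g : g j0 ≠ 0 := (Finset.mem_filter.mp hj0t).2
    have hc : (∑ j ∈ s, g j • f j).coeff α = g j0 * (f j0).coeff α := by
      rw [MvPolynomial.coeff_sum]
      rw [Finset.sum_eq_single j0]
      · rw [MvPolynomial.coeff_smul, smul_eq_mul]
      · intro b hb hbne
        rw [MvPolynomial.coeff_smul, smul_eq_mul]
        by_cases hgb : g b = 0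
        · simp [hgb]
        · have hbt : b ∈ t := Finset.mem_filter.mpr ⟨hb, hgb⟩
          have hbv : (b : Fin n →₀ ℕ) ≠ α := by
            intro h
            exact hbne (Subtype.ext (h.trans hj0.symm))
          have hcoeff : (f b).coeff α = 0 := by
            by_contra h
            have hαs : α ∈ (f b).support := MvPolynomial.mem_support_iff.mpr h
            have h1 : lt α (b : Fin n →₀ ℕ) := hfl b α hαs (Ne.symm hbv)
            have h2 : lt (b : Fin n →₀ ℕ) α :=
              hαmax _ (Finset.mem_image_of_mem _ hbt) hbv
            exact hirr α (htrans _ _ _ h1 h2)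
          simp [hcoeff]
      · intro h
        exact absurd ((Finset.mem_filter.mp hj0t).1) h
    have hc0 : (f j0).coeff α ≠ 0 := by
      rw [← hj0]
      exact MvPolynomial.mem_support_iff.mp (hfs j0)
    have : (0 : MvPolynomial (Fin n) K).coeff α = g j0 * (f j0).coeff α := by
      rw [← hsum]; exact hc
    simp only [MvPolynomial.coeff_zero] at this
    exact (mul_ne_zero hj0g hc0) this.symm
  -- f takes values in V, so E is finite
  have hliV : LinearIndependent K (fun α : E => (⟨f α, hfV α⟩ : V)) :=
    LinearIndependent.of_comp V.subtype (by exact hli)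
  haveI : Finite E := hliV.finite
  haveI : Fintype E := Fintype.ofFinite E
  -- spanning
  have hspan : ∀ v ∈ V, v ∈ Submodule.span K (Set.range f) := by
    have key : ∀ N : ℕ, ∀ v, v ∈ V → ∀ α, α ∈ v.support →
        (∀ β ∈ v.support, β ≠ α → lt β α) →
        (E.toFinset.filter (fun β => β = α ∨ lt β α)).card ≤ N →
        v ∈ Submodule.span K (Set.range f) := by
      intro N
      induction N with
      | zero =>
        intro v hv α hαs hαl hcard
        have hv0 : v ≠ 0 := fun h => by simp [h] at hαs
        have hαE : α ∈ E := ⟨v, hv, hv0, hαs, hαl⟩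
        have : α ∈ E.toFinset.filter (fun β => β = α ∨ lt β α) :=
          Finset.mem_filter.mpr ⟨Set.mem_toFinset.mpr hαE, Or.inl rfl⟩
        have := Finset.card_pos.mpr ⟨α, this⟩
        omega
      | succ N ih =>
        intro v hv α hαs hαl hcard
        have hv0 : v ≠ 0 := fun h => by simp [h] at hαs
        have hαE : α ∈ E := ⟨v, hv, hv0, hαs, hαl⟩
        set a : E := ⟨α, hαE⟩ with ha
        have hfc : (f a).coeff α ≠ 0 := MvPolynomial.mem_support_iff.mp (hfs a)
        set c : K := v.coeff α / (f a).coeff α with hcdef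
        set w : MvPolynomial (Fin n) K := v - c • f a with hwdef
        have hwα : w.coeff α = 0 := by
          rw [hwdef, MvPolynomial.coeff_sub, MvPolynomial.coeff_smul, smul_eq_mul,
            hcdef, div_mul_cancel₀ _ hfc, sub_self]
        have hwsup : ∀ β ∈ w.support, lt β α := by
          intro β hβ
          have hβα : β ≠ α := fun h => by
            rw [h] at hβ; exact MvPolynomial.mem_support_iff.mp hβ hwα
          have hβc : w.coeff β ≠ 0 := MvPolynomial.mem_support_iff.mp hβ
          by_cases hβv : β ∈ v.support
          · exact hαl β hβv hβα
          · have hβf : β ∈ (f a).support := by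
              by_contra hβf
              apply hβc
              rw [hwdef, MvPolynomial.coeff_sub, MvPolynomial.coeff_smul, smul_eq_mul,
                MvPolynomial.notMem_support_iff.mp hβv,
                MvPolynomial.notMem_support_iff.mp hβf]
              ring
            exact hfl a β hβf hβα
        have hw : w ∈ V := Submodule.sub_mem V hv (Submodule.smul_mem V c (hfV a))
        have hfmem : f a ∈ Submodule.span K (Set.range f) :=
          Submodule.subset_span ⟨a, rfl⟩
        have hvw : v = w + c • f a := by rw [hwdef]; ring
        suffices hws : w ∈ Submodule.span K (Set.range f) by
          rw [hvw]
          exact Submodule.add_mem _ hws (Submodule.smul_mem _ c hfmem)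
        by_cases hw0 : w = 0
        · rw [hw0]; exact Submodule.zero_mem _
        · obtain ⟨α', hα's, hα'max⟩ := exists_lt_max' lt htrans htotal w.support
            (MvPolynomial.support_nonempty.mpr hw0)
          apply ih w hw α' hα's hα'max
          have hα'α : lt α' α := hwsup α' hα's
          have hsub : E.toFinset.filter (fun β => β = α' ∨ lt β α') ⊆
              E.toFinset.filter (fun β => β = α ∨ lt β α) := by
            intro β hβ
            obtain ⟨hβE, hβo⟩ := Finset.mem_filter.mp hβ
            refine Finset.mem_filter.mpr ⟨hβE, Or.inr ?_⟩
            rcases hβo with rfl | hβlt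
            · exact hα'α
            · exact htrans β α' α hβlt hα'α
          have hαin : α ∈ E.toFinset.filter (fun β => β = α ∨ lt β α) :=
            Finset.mem_filter.mpr ⟨Set.mem_toFinset.mpr hαE, Or.inl rfl⟩
          have hαnotin : α ∉ E.toFinset.filter (fun β => β = α' ∨ lt β α') := by
            intro hmem
            rcases (Finset.mem_filter.mp hmem).2 with rfl | hlt
            · exact hirr α hα'α
            · exact hirr α (htrans _ _ _ hlt hα'α)
          have hlt : (E.toFinset.filter (fun β => β = α' ∨ lt β α')).card <
              (E.toFinset.filter (fun β => β = α ∨ lt β α)).card :=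
            Finset.card_lt_card ⟨hsub, fun hsub' => hαnotin (hsub' hαin)⟩
          omega
    intro v hv
    by_cases hv0 : v = 0
    · rw [hv0]; exact Submodule.zero_mem _
    · obtain ⟨α, hαs, hαmax⟩ := exists_lt_max' lt htrans htotal v.support
        (MvPolynomial.support_nonempty.mpr hv0)
      exact key _ v hv α hαs hαmax le_rfl
  -- the set in the statement is the range of the monomial family over E
  have hsetS : { m : MvPolynomial (Fin n) K | ∃ v ∈ V, v ≠ 0 ∧ ∃ α ∈ v.support,
          (∀ β ∈ v.support, β ≠ α → lt β α) ∧ m = MvPolynomial.monomial α (1 : K) }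
      = Set.range (fun α : E => MvPolynomial.monomial (α : Fin n →₀ ℕ) (1 : K)) := by
    ext m
    constructor
    · rintro ⟨v, hv, hv0, α, hαs, hαl, rfl⟩
      exact ⟨⟨α, v, hv, hv0, hαs, hαl⟩, rfl⟩
    · rintro ⟨⟨α, v, hv, hv0, hαs, hαl⟩, rfl⟩
      exact ⟨v, hv, hv0, α, hαs, hαl, rfl⟩
  rw [hsetS]
  have hmli : LinearIndependent K
      (fun α : E => MvPolynomial.monomial (α : Fin n →₀ ℕ) (1 : K)) := by
    have hb := (MvPolynomial.basisMonomials (Fin n) K).linearIndependent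
    have := hb.comp (fun α : E => (α : Fin n →₀ ℕ)) Subtype.val_injective
    rwa [MvPolynomial.coe_basisMonomials] at this
  rw [finrank_span_eq_card hmli]
  have hVspan : Submodule.span K (Set.range f) = V := by
    apply le_antisymm
    · rw [Submodule.span_le]
      rintro _ ⟨α, rfl⟩
      exact hfV α
    · intro v hv
      exact hspan v hv
  rw [← hVspan, finrank_span_eq_card hli]
end

section
/- Let K be a field and let a₁,…,a_s ∈ ℕⁿ. The kernel of the K-algebra homomorphism φ: K[y₁,…,y_s] → K[x₁,…,xₙ] with φ(yᵢ) = x^{aᵢ} is generated as an ideal by the binomials y^u − y^v, taken over all pairs u, v ∈ ℕ^s with Σ uᵢ aᵢ = Σ vᵢ aᵢ. -/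
/-!
Since `φ(y^u) = x^{Σ uᵢ aᵢ}`, the map `φ` is the monoid-algebra map induced by
`u ↦ Σ uᵢ aᵢ`, so as a `K`-linear map it merely sums coefficients along the fibres of this
weight map. The kernel of such a map is spanned over `K` by the differences of two monomials
in a common fibre: subtracting from `p` its image under the retraction of each fibre onto a
chosen point leaves a combination of such binomials, and that image vanishes with `φ(p)`.
-/

open MvPolynomial

namespace AddMonoidAlgebra

theorem ker_mapDomainLinearMap_eq_span {R M N : Type*} [Ring R] (f : M → N) :
    LinearMap.ker (mapDomainLinearMap R R f) =
      Submodule.span R {x | ∃ u v, f u = f v ∧ x = single u 1 - single v 1} := by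
  set S := Submodule.span R {x : R[M] | ∃ u v, f u = f v ∧ x = single u 1 - single v 1}
  refine le_antisymm (fun x hx => ?_) (Submodule.span_le.2 ?_)
  · rcases isEmpty_or_nonempty M with _ | _
    · obtain rfl : x = 0 := by ext m; exact isEmptyElim m
      exact zero_mem S
    set r : M → M := Function.invFun f ∘ f
    have hrx : mapDomainLinearMap R R r x = 0 := by
      rw [mapDomainLinearMap_comp, LinearMap.comp_apply, LinearMap.mem_ker.1 hx, map_zero]
    have hsub (y : R[M]) : y - mapDomainLinearMap R R r y ∈ S := by
      induction y using induction_linear with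
      | zero => simp
      | add y z hy hz => simpa [add_sub_add_comm] using add_mem hy hz
      | single u c =>
        have hu : f u = f (r u) := (Function.invFun_eq ⟨u, rfl⟩).symm
        rw [mapDomainLinearMap_single, ← mul_one c, ← smul_single', ← smul_single', ← smul_sub]
        exact Submodule.smul_mem _ c (Submodule.subset_span ⟨u, r u, hu, rfl⟩)
    simpa [hrx] using hsub x
  · rintro x ⟨u, v, huv, rfl⟩
    simp [huv]

end AddMonoidAlgebra

theorem MvPolynomial.aeval_monomial_one_eq_mapDomainAlgHom {R σ τ : Type*} [CommSemiring R]
    (a : σ → τ →₀ ℕ) :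
    aeval (fun i => monomial (a i) (1 : R)) =
      AddMonoidAlgebra.mapDomainAlgHom R R (Finsupp.linearCombination ℕ a).toAddMonoidHom := by
  ext i : 1
  rw [aeval_X, AddMonoidAlgebra.mapDomainAlgHom_apply, X, ← single_eq_monomial,
    ← single_eq_monomial, AddMonoidAlgebra.mapDomain_single]
  simp

theorem toric_ideal_generated_by_binomials {K : Type*} [Field K] {n s : ℕ}
    (a : Fin s → (Fin n →₀ ℕ)) :
    RingHom.ker (MvPolynomial.aeval
        (fun i : Fin s => (MvPolynomial.monomial (a i) (1 : K) : MvPolynomial (Fin n) K))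
        : MvPolynomial (Fin s) K →ₐ[K] MvPolynomial (Fin n) K).toRingHom
      = Ideal.span { p : MvPolynomial (Fin s) K |
          ∃ u v : Fin s →₀ ℕ,
            (u.sum fun i m => m • a i) = (v.sum fun i m => m • a i) ∧
            p = MvPolynomial.monomial u (1 : K) - MvPolynomial.monomial v (1 : K) } := by
  set B := { p : MvPolynomial (Fin s) K |
    ∃ u v : Fin s →₀ ℕ,
      (u.sum fun i m => m • a i) = (v.sum fun i m => m • a i) ∧
      p = MvPolynomial.monomial u (1 : K) - MvPolynomial.monomial v (1 : K) }
  have hker (p : MvPolynomial (Fin s) K) : p ∈ Submodule.span K B ↔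
      p ∈ RingHom.ker (aeval fun i => monomial (a i) (1 : K) :
        MvPolynomial (Fin s) K →ₐ[K] MvPolynomial (Fin n) K).toRingHom := by
    change p ∈ Submodule.span K {x | ∃ u v, Finsupp.linearCombination ℕ a u =
      Finsupp.linearCombination ℕ a v ∧
        x = AddMonoidAlgebra.single u 1 - AddMonoidAlgebra.single v 1} ↔ _
    rw [← AddMonoidAlgebra.ker_mapDomainLinearMap_eq_span, LinearMap.mem_ker, RingHom.mem_ker,
      AlgHom.toRingHom_eq_coe, RingHom.coe_coe, aeval_monomial_one_eq_mapDomainAlgHom]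
    rfl
  refine le_antisymm (fun p hp => ?_) (Ideal.span_le.2 fun p hp => ?_)
  · exact Submodule.span_le_restrictScalars K _ B ((hker p).2 hp)
  · exact (hker p).1 (Submodule.subset_span hp)
end

section
/- The submonoid of (ℕ², +) generated by the set {(1,0)} ∪ {(1,k) : k ≥ 1} is not finitely generated. -/
/-!
Every generator has first coordinate `1`, so the first coordinate of a nonzero element of the
monoid is positive. Hence the elements `(1, k)` are atoms: they cannot be written as a sum of two
nonzero elements, so every generating set contains all of them and is infinite.
-/

namespace AddSubmonoid

variable {M : Type*} [AddMonoid M]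

theorem eq_zero_of_mem_closure_of_map_eq_zero {S : Set M} (f : M →+ ℕ)
    (hS : ∀ s ∈ S, f s ≠ 0) {x : M} (hx : x ∈ closure S) (hfx : f x = 0) : x = 0 := by
  induction hx using closure_induction with
  | mem s hs => exact absurd hfx (hS s hs)
  | zero => rfl
  | add a b _ _ iha ihb =>
    rw [map_add, Nat.add_eq_zero_iff] at hfx
    rw [iha hfx.1, ihb hfx.2, add_zero]

theorem mem_of_mem_closure_of_atom {T : Set M} {x : M} (hx : x ∈ closure T) (hx0 : x ≠ 0)
    (hatom : ∀ a ∈ closure T, ∀ b ∈ closure T, a + b = x → a = 0 ∨ b = 0) : x ∈ T := by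
  induction hx using closure_induction with
  | mem s hs => exact hs
  | zero => exact absurd rfl hx0
  | add a b ha hb iha ihb =>
    rcases hatom a ha b hb rfl with rfl | rfl
    · rw [zero_add] at hx0 hatom
      exact (zero_add b).symm ▸ ihb hx0 hatom
    · rw [add_zero] at hx0 hatom
      exact (add_zero a).symm ▸ iha hx0 hatom

theorem mem_of_closure_eq_of_map_eq_one {S T : Set M} (f : M →+ ℕ) (hS : ∀ s ∈ S, f s ≠ 0)
    (hT : closure T = closure S) {x : M} (hx : x ∈ closure S) (hfx : f x = 1) : x ∈ T := by
  rw [← hT] at hx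
  refine mem_of_mem_closure_of_atom hx (fun h ↦ by simp [h] at hfx) fun a ha b hb hab ↦ ?_
  rw [hT] at ha hb
  have hsum : f a + f b = 1 := by rw [← map_add, hab, hfx]
  rcases Nat.add_eq_one_iff.mp hsum with ⟨hfa, -⟩ | ⟨-, hfb⟩
  · exact .inl (eq_zero_of_mem_closure_of_map_eq_zero f hS ha hfa)
  · exact .inr (eq_zero_of_mem_closure_of_map_eq_zero f hS hb hfb)

end AddSubmonoid

theorem initial_exponent_monoid_not_fg :
    ¬ (AddSubmonoid.closure
        ({(1, 0)} ∪ {p : ℕ × ℕ | ∃ k : ℕ, 1 ≤ k ∧ p = (1, k)})).FG := by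
  rintro ⟨T, hT⟩
  have hfst : ∀ s ∈ ({(1, 0)} ∪ {p : ℕ × ℕ | ∃ k : ℕ, 1 ≤ k ∧ p = (1, k)}),
      AddMonoidHom.fst ℕ ℕ s ≠ 0 := by
    rintro s (rfl | ⟨k, -, rfl⟩) <;> simp
  have hgen : ∀ k : ℕ, ((1, k) : ℕ × ℕ) ∈ T := fun k ↦ by
    refine AddSubmonoid.mem_of_closure_eq_of_map_eq_one _ hfst hT
      (AddSubmonoid.subset_closure ?_) rfl
    rcases Nat.eq_zero_or_pos k with rfl | hk
    exacts [.inl rfl, .inr ⟨k, hk, rfl⟩]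
  have hinf : (T : Set (ℕ × ℕ)).Infinite :=
    Set.infinite_of_injective_forall_mem (fun _ _ h ↦ (Prod.mk.inj h).2) hgen
  exact hinf T.finite_toSet
end

section
/- For every integer k ≥ 1, the subalgebra S = ℚ[x+y, xy, xy²] of ℚ[x,y] contains an element whose lex-leading monomial (with x > y) is x·y^k. -/
open MvPolynomial

lemma xyk_mem (k : ℕ) :
    (X 0 * X 1 ^ (k+1) : MvPolynomial (Fin 2) ℚ) ∈ Algebra.adjoin ℚ
      ({X 0 + X 1, X 0 * X 1, X 0 * X 1 ^ 2} : Set (MvPolynomial (Fin 2) ℚ)) ∧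
    (X 0 * X 1 ^ (k+2) : MvPolynomial (Fin 2) ℚ) ∈ Algebra.adjoin ℚ
      ({X 0 + X 1, X 0 * X 1, X 0 * X 1 ^ 2} : Set (MvPolynomial (Fin 2) ℚ)) := by
  induction k with
  | zero =>
    constructor
    · simpa using Algebra.subset_adjoin (by simp : (X 0 * X 1 : MvPolynomial (Fin 2) ℚ) ∈ _)
    · exact Algebra.subset_adjoin (by simp)
  | succ n ih =>
    obtain ⟨h1, h2⟩ := ih
    refine ⟨h2, ?_⟩
    have key : (X 0 * X 1 ^ (n+3) : MvPolynomial (Fin 2) ℚ)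
        = (X 0 * X 1 ^ (n+2)) * (X 0 + X 1) - (X 0 * X 1) * (X 0 * X 1 ^ (n+1)) := by
      ring
    rw [key]
    have hq : (X 0 * X 1 : MvPolynomial (Fin 2) ℚ) ∈ Algebra.adjoin ℚ
        ({X 0 + X 1, X 0 * X 1, X 0 * X 1 ^ 2} : Set (MvPolynomial (Fin 2) ℚ)) :=
      Algebra.subset_adjoin (by simp)
    have hp : (X 0 + X 1 : MvPolynomial (Fin 2) ℚ) ∈ Algebra.adjoin ℚ
        ({X 0 + X 1, X 0 * X 1, X 0 * X 1 ^ 2} : Set (MvPolynomial (Fin 2) ℚ)) :=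
      Algebra.subset_adjoin (by simp)
    exact sub_mem (mul_mem h2 hp) (mul_mem hq h1)

theorem exists_element_with_lex_leading_monomial_xyk (k : ℕ) (hk : 1 ≤ k) :
    ∃ f ∈ Algebra.adjoin ℚ
        ({X 0 + X 1, X 0 * X 1, X 0 * X 1 ^ 2} : Set (MvPolynomial (Fin 2) ℚ)),
      f ≠ 0 ∧
      (Finsupp.single (0 : Fin 2) 1 + Finsupp.single (1 : Fin 2) k) ∈ f.support ∧
      ∀ β ∈ f.support,
        toLex β ≤ toLex (Finsupp.single (0 : Fin 2) 1 + Finsupp.single (1 : Fin 2) k) := by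
  obtain ⟨m, rfl⟩ : ∃ m, k = m + 1 := ⟨k - 1, (Nat.succ_pred_eq_of_pos hk).symm⟩
  refine ⟨X 0 * X 1 ^ (m+1), (xyk_mem m).1, ?_, ?_, ?_⟩
  all_goals
    have hmono : (X 0 * X 1 ^ (m+1) : MvPolynomial (Fin 2) ℚ)
        = monomial (Finsupp.single (0 : Fin 2) 1 + Finsupp.single (1 : Fin 2) (m+1)) 1 := by
      rw [X_pow_eq_monomial, X, monomial_mul, one_mul]
    rw [hmono]
  · simp [monomial_eq_zero]
  · rw [support_monomial]
    simp
  · intro β hβ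
    rw [support_monomial] at hβ
    simp only [if_neg one_ne_zero, Finset.mem_singleton] at hβ
    subst hβ
    exact le_rfl
end

section
/- Let K be a field, let F = {f₁,…,f_s} be nonzero polynomials in K[x₁,…,xₙ] such that each in_ω(fᵢ) is a single monomial, and suppose ω' ∈ ℝⁿ satisfies in_{ω'}(fᵢ) = in_ω(fᵢ) for all i. If the multiplicative monoid generated by {in_ω(fᵢ)} equals the set of all ω-initial monomials of nonzero elements of S = K[f₁,…,f_s] (i.e., F is a SAGBI basis of S with respect to ω), then the same holds with ω replaced by ω' (F is a SAGBI basis of S with respect to ω'). -/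
open MvPolynomial

/-- weight of an exponent vector -/
noncomputable def wdot {n : ℕ} (ω : Fin n → ℝ) (α : Fin n →₀ ℕ) : ℝ :=
  ∑ i, ω i * (α i : ℝ)

open Classical in
/-- ω-initial form of a polynomial. -/
noncomputable def initForm {K : Type*} [Field K] {n : ℕ} (ω : Fin n → ℝ)
    (f : MvPolynomial (Fin n) K) : MvPolynomial (Fin n) K :=
  ∑ α ∈ f.support.filter (fun α => ∀ β ∈ f.support, wdot ω β ≤ wdot ω α),
    MvPolynomial.monomial α (f.coeff α)

/-- `F = (f i)` is a SAGBI basis of `S = K[f₁,…,f_s]` with respect to the weight `w`: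
the (additive) monoid generated by the exponents of the initial monomials of the `f i`
equals the set of exponents of `w`-initial monomials of all nonzero elements of `S`. -/
def IsSagbiBasis {K : Type*} [Field K] {n s : ℕ} (w : Fin n → ℝ)
    (f : Fin s → MvPolynomial (Fin n) K) : Prop :=
  (AddSubmonoid.closure {α : Fin n →₀ ℕ | ∃ i, (initForm w (f i)).support = {α}} :
      Set (Fin n →₀ ℕ))
    = {α : Fin n →₀ ℕ | ∃ g ∈ Algebra.adjoin K (Set.range f), g ≠ 0 ∧
        (initForm w g).support = {α}}

/-!
Let `δ > 0` be smaller than every positive `ω`-weight difference inside the supports of the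
`fᵢ`. For `β` in the monoid generated by the initial exponents of the `fᵢ`, a suitable product
of the `fᵢ` has initial exponent `β` for both weights (the initial forms agree), and all its
other monomials are at least `δ` lower in `ω`-weight. This gives one inclusion.

Conversely, let `g ∈ S` have `ω'`-initial exponent `α`. Its `ω`-initial exponent `β` lies in
the monoid by the SAGBI property for `ω`; if `β ≠ α`, cancel the term `x ^ β` with such a
product. Since `β` is `ω'`-lower than `α`, so is the whole product, and the `ω'`-initial
exponent stays `α`. The process must reach `β = α`, although real weights are not
well-ordered: because of the gap `δ`, each cancellation removes a monomial from the top
`ω`-weight band of width `δ` and only adds monomials below it, and the `ω`-initial weight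
stays at least `wdot ω α`.
-/

open Filter Topology

section

variable {K : Type*} [Field K] {n : ℕ}

def IsInitialExponent (ω : Fin n → ℝ) (g : MvPolynomial (Fin n) K) (β : Fin n →₀ ℕ) : Prop :=
  (initForm ω g).support = {β}

def HasInitialGap (ω : Fin n → ℝ) (δ : ℝ) (g : MvPolynomial (Fin n) K) (β : Fin n →₀ ℕ) :
    Prop :=
  β ∈ g.support ∧ ∀ γ ∈ g.support, γ ≠ β → wdot ω γ + δ ≤ wdot ω β

lemma wdot_add (ω : Fin n → ℝ) (a b : Fin n →₀ ℕ) :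
    wdot ω (a + b) = wdot ω a + wdot ω b := by
  simp only [wdot, Finsupp.coe_add, Pi.add_apply, Nat.cast_add, mul_add, Finset.sum_add_distrib]

lemma mem_support_initForm {ω : Fin n → ℝ} {g : MvPolynomial (Fin n) K} {γ : Fin n →₀ ℕ} :
    γ ∈ (initForm ω g).support ↔ γ ∈ g.support ∧ ∀ β ∈ g.support, wdot ω β ≤ wdot ω γ := by
  classical
  simp only [initForm, mem_support_iff, coeff_sum, coeff_monomial, Finset.sum_ite_eq',
    Finset.mem_filter]
  split_ifs with h <;> simp_all

lemma isInitialExponent_iff {ω : Fin n → ℝ} {g : MvPolynomial (Fin n) K} {β : Fin n →₀ ℕ} :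
    IsInitialExponent ω g β ↔
      β ∈ g.support ∧ ∀ γ ∈ g.support, γ ≠ β → wdot ω γ < wdot ω β := by
  simp only [IsInitialExponent, Finset.eq_singleton_iff_unique_mem, mem_support_initForm]
  constructor
  · rintro ⟨⟨hβ, hmax⟩, huniq⟩
    refine ⟨hβ, fun γ hγ hγβ => lt_of_not_ge fun hle => hγβ (huniq γ ⟨hγ, fun δ hδ => ?_⟩)⟩
    exact (hmax δ hδ).trans hle
  · rintro ⟨hβ, hlt⟩
    refine ⟨⟨hβ, fun γ hγ => ?_⟩, fun γ ⟨hγ, hmax⟩ => by_contra fun hγβ => ?_⟩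
    · rcases eq_or_ne γ β with rfl | hγβ
      exacts [le_rfl, (hlt γ hγ hγβ).le]
    · exact (hmax β hβ).not_gt (hlt γ hγ hγβ)

namespace IsInitialExponent

variable {ω : Fin n → ℝ} {g h : MvPolynomial (Fin n) K} {α β : Fin n →₀ ℕ}

lemma mem_support (hg : IsInitialExponent ω g β) : β ∈ g.support :=
  (isInitialExponent_iff.mp hg).1

lemma ne_zero (hg : IsInitialExponent ω g β) : g ≠ 0 := by
  rintro rfl
  simpa using hg.mem_support

lemma wdot_le (hg : IsInitialExponent ω g β) {γ : Fin n →₀ ℕ} (hγ : γ ∈ g.support) :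
    wdot ω γ ≤ wdot ω β := by
  rcases eq_or_ne γ β with rfl | hγβ
  exacts [le_rfl, ((isInitialExponent_iff.mp hg).2 γ hγ hγβ).le]

lemma sub_smul (hg : IsInitialExponent ω g α) (hh : IsInitialExponent ω h β)
    (hβα : wdot ω β < wdot ω α) (c : K) : IsInitialExponent ω (g - c • h) α := by
  classical
  have hαh : α ∉ h.support := fun hα => (hh.wdot_le hα).not_gt hβα
  have hsupp : (g - c • h).support ⊆ g.support ∪ h.support :=
    (support_sub _ _ _).trans (Finset.union_subset_union_right support_smul)
  have hcoeff : coeff α (g - c • h) = coeff α g := by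
    simp [notMem_support_iff.mp hαh]
  refine isInitialExponent_iff.mpr ⟨by simpa [hcoeff] using hg.mem_support, fun γ hγ hγα => ?_⟩
  rcases Finset.mem_union.mp (hsupp hγ) with hγ | hγ
  · exact (isInitialExponent_iff.mp hg).2 γ hγ hγα
  · exact (hh.wdot_le hγ).trans_lt hβα

end IsInitialExponent

namespace HasInitialGap

variable {ω : Fin n → ℝ} {δ : ℝ} {g h : MvPolynomial (Fin n) K} {β γ : Fin n →₀ ℕ}

lemma wdot_le (hg : HasInitialGap ω δ g β) (hδ : 0 ≤ δ) {μ : Fin n →₀ ℕ} (hμ : μ ∈ g.support) :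
    wdot ω μ ≤ wdot ω β := by
  rcases eq_or_ne μ β with rfl | hμβ
  exacts [le_rfl, by linarith [hg.2 μ hμ hμβ]]

lemma isInitialExponent (hg : HasInitialGap ω δ g β) (hδ : 0 < δ) : IsInitialExponent ω g β :=
  isInitialExponent_iff.mpr ⟨hg.1, fun μ hμ hμβ => by linarith [hg.2 μ hμ hμβ]⟩

lemma one (ω : Fin n → ℝ) (δ : ℝ) : HasInitialGap ω δ (1 : MvPolynomial (Fin n) K) 0 := by
  simp [HasInitialGap, support_one]

lemma mul (hg : HasInitialGap ω δ g β) (hh : HasInitialGap ω δ h γ) (hδ : 0 < δ) :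
    HasInitialGap ω δ (g * h) (β + γ) := by
  classical
  have key : ∀ μ ∈ g.support, ∀ ν ∈ h.support, (μ, ν) ≠ (β, γ) →
      wdot ω (μ + ν) + δ ≤ wdot ω (β + γ) := by
    intro μ hμ ν hν hne
    rw [wdot_add, wdot_add]
    rcases eq_or_ne μ β with rfl | hμβ
    · linarith [hh.2 ν hν fun hνγ => hne (by rw [hνγ])]
    · linarith [hg.2 μ hμ hμβ, hh.wdot_le hδ.le hν]
  have hcoeff : coeff (β + γ) (g * h) = coeff β g * coeff γ h := by
    rw [coeff_mul]
    refine Finset.sum_eq_single (β, γ) (fun ⟨μ, ν⟩ hμν hne => ?_) (by simp)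
    rw [Finset.HasAntidiagonal.mem_antidiagonal] at hμν
    by_contra hprod
    have hμ : μ ∈ g.support := mem_support_iff.mpr (left_ne_zero_of_mul hprod)
    have hν : ν ∈ h.support := mem_support_iff.mpr (right_ne_zero_of_mul hprod)
    linarith [key μ hμ ν hν hne, congrArg (wdot ω) hμν]
  refine ⟨mem_support_iff.mpr ?_, fun μν hμν hne => ?_⟩
  · rw [hcoeff]
    exact mul_ne_zero (mem_support_iff.mp hg.1) (mem_support_iff.mp hh.1)
  · obtain ⟨μ, hμ, ν, hν, rfl⟩ := Finset.mem_add.mp (support_mul g h hμν)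
    exact key μ hμ ν hν fun hμν' => hne (by simp_all)

end HasInitialGap

lemma IsInitialExponent.eventually_hasInitialGap {ω : Fin n → ℝ} {g : MvPolynomial (Fin n) K}
    {β : Fin n →₀ ℕ} (hg : IsInitialExponent ω g β) :
    ∀ᶠ δ in 𝓝[>] 0, HasInitialGap ω δ g β := by
  have hlt := (isInitialExponent_iff.mp hg).2
  have : ∀ᶠ δ in 𝓝[>] (0 : ℝ), ∀ μ ∈ g.support.erase β, δ < wdot ω β - wdot ω μ :=
    (g.support.erase β).eventually_all.mpr fun μ hμ =>
      nhdsWithin_le_nhds <| eventually_lt_nhds <| sub_pos.mpr <|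
        hlt μ (Finset.mem_of_mem_erase hμ) (Finset.ne_of_mem_erase hμ)
  filter_upwards [this] with δ hδ
  exact ⟨hg.mem_support, fun μ hμ hμβ => by linarith [hδ μ (Finset.mem_erase.mpr ⟨hμβ, hμ⟩)]⟩

lemma eventually_forall_hasInitialGap {ι : Type*} [Finite ι] (ω : Fin n → ℝ)
    (f : ι → MvPolynomial (Fin n) K) :
    ∀ᶠ δ in 𝓝[>] 0, ∀ i β, IsInitialExponent ω (f i) β → HasInitialGap ω δ (f i) β := by
  refine eventually_all.mpr fun i => ?_
  by_cases hi : ∃ β, IsInitialExponent ω (f i) β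
  · obtain ⟨β, hβ⟩ := hi
    filter_upwards [hβ.eventually_hasInitialGap] with δ hδ β' hβ'
    rw [IsInitialExponent, hβ, Finset.singleton_inj] at hβ'
    exact hβ' ▸ hδ
  · exact Eventually.of_forall fun δ β hβ => absurd ⟨β, hβ⟩ hi

lemma IsInitialExponent.mul {ω : Fin n → ℝ} {g h : MvPolynomial (Fin n) K} {β γ : Fin n →₀ ℕ}
    (hg : IsInitialExponent ω g β) (hh : IsInitialExponent ω h γ) :
    IsInitialExponent ω (g * h) (β + γ) := by
  obtain ⟨δ, ⟨hgδ, hhδ⟩, hδ⟩ :=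
    ((hg.eventually_hasInitialGap.and hh.eventually_hasInitialGap).and self_mem_nhdsWithin).exists
  exact (hgδ.mul hhδ hδ).isInitialExponent hδ

lemma exists_mem_adjoin_of_mem_closure {ι : Type*} {f : ι → MvPolynomial (Fin n) K}
    {ω ω' : Fin n → ℝ} {δ : ℝ} (hδ : 0 < δ)
    (hgap : ∀ i β, IsInitialExponent ω (f i) β → HasInitialGap ω δ (f i) β)
    (heq : ∀ i, initForm ω' (f i) = initForm ω (f i)) {β : Fin n →₀ ℕ}
    (hβ : β ∈ AddSubmonoid.closure {α | ∃ i, IsInitialExponent ω (f i) α}) :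
    ∃ h ∈ Algebra.adjoin K (Set.range f), IsInitialExponent ω' h β ∧ HasInitialGap ω δ h β := by
  induction hβ using AddSubmonoid.closure_induction with
  | mem β hβ =>
    obtain ⟨i, hi⟩ := hβ
    refine ⟨f i, Algebra.subset_adjoin (Set.mem_range_self i), ?_, hgap i β hi⟩
    rwa [IsInitialExponent, heq i]
  | zero =>
    exact ⟨1, Subalgebra.one_mem _, (HasInitialGap.one ω' 1).isInitialExponent one_pos,
      HasInitialGap.one ω δ⟩
  | add β γ _ _ ihβ ihγ =>
    obtain ⟨g, hgS, hgω', hgω⟩ := ihβ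
    obtain ⟨h, hhS, hhω', hhω⟩ := ihγ
    exact ⟨g * h, Subalgebra.mul_mem _ hgS hhS, hgω'.mul hhω', hgω.mul hhω hδ⟩

section Subduction

variable {S : Submodule K (MvPolynomial (Fin n) K)} {M : Set (Fin n →₀ ℕ)} {ω ω' : Fin n → ℝ}
  {δ : ℝ} {α : Fin n →₀ ℕ}

lemma exists_sub_cancel_initial
    (hlift : ∀ β ∈ M, ∃ h ∈ S, IsInitialExponent ω' h β ∧ HasInitialGap ω δ h β)
    {g : MvPolynomial (Fin n) K} (hg : g ∈ S) (hgα : IsInitialExponent ω' g α)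
    {β : Fin n →₀ ℕ} (hgβ : IsInitialExponent ω g β) (hβM : β ∈ M) (hβα : β ≠ α) :
    ∃ g' ∈ S, IsInitialExponent ω' g' α ∧ β ∉ g'.support ∧
      ∀ γ ∈ g'.support, γ ∈ g.support ∨ wdot ω γ + δ ≤ wdot ω β := by
  classical
  obtain ⟨h, hhS, hhω', hhω⟩ := hlift β hβM
  have hβh : coeff β h ≠ 0 := mem_support_iff.mp hhω.1
  set c := coeff β g / coeff β h
  have hsupp : (g - c • h).support ⊆ g.support ∪ h.support :=
    (support_sub _ _ _).trans (Finset.union_subset_union_right support_smul)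
  refine ⟨g - c • h, S.sub_mem hg (S.smul_mem c hhS), ?_, ?_, fun γ hγ => ?_⟩
  · exact hgα.sub_smul hhω'
      ((isInitialExponent_iff.mp hgα).2 β hgβ.mem_support hβα) c
  · simp [c, div_mul_cancel₀ _ hβh]
  · refine (Finset.mem_union.mp (hsupp hγ)).imp id fun hγh => hhω.2 γ hγh ?_
    rintro rfl
    simp [c, div_mul_cancel₀ _ hβh] at hγ

lemma mem_of_forall_wdot_le_of_card_le
    (hlead : ∀ g ∈ S, g ≠ 0 → ∃ β ∈ M, IsInitialExponent ω g β)
    (hlift : ∀ β ∈ M, ∃ h ∈ S, IsInitialExponent ω' h β ∧ HasInitialGap ω δ h β) {t : ℝ}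
    (hbelow : ∀ g ∈ S, IsInitialExponent ω' g α → (∀ γ ∈ g.support, wdot ω γ ≤ t - δ) → α ∈ M)
    (m : ℕ) {g : MvPolynomial (Fin n) K} (hg : g ∈ S) (hgα : IsInitialExponent ω' g α)
    (hgt : ∀ γ ∈ g.support, wdot ω γ ≤ t)
    (hcard : (g.support.filter fun γ => t - δ < wdot ω γ).card ≤ m) : α ∈ M := by
  classical
  induction m generalizing g with
  | zero =>
    refine hbelow g hg hgα fun γ hγ => not_lt.mp fun hlt => ?_
    exact (Finset.card_pos.mpr ⟨γ, Finset.mem_filter.mpr ⟨hγ, hlt⟩⟩).not_ge hcard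
  | succ m ih =>
    obtain ⟨β, hβM, hgβ⟩ := hlead g hg hgα.ne_zero
    by_cases hβα : β = α
    · exact hβα ▸ hβM
    by_cases hβt : wdot ω β ≤ t - δ
    · exact hbelow g hg hgα fun γ hγ => (hgβ.wdot_le hγ).trans hβt
    obtain ⟨g', hg'S, hg'α, hβg', hg'supp⟩ := exists_sub_cancel_initial hlift hg hgα hgβ hβM hβα
    have hβtop : β ∈ g.support.filter fun γ => t - δ < wdot ω γ :=
      Finset.mem_filter.mpr ⟨hgβ.mem_support, not_le.mp hβt⟩
    have htop : (g'.support.filter fun γ => t - δ < wdot ω γ) ⊆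
        (g.support.filter fun γ => t - δ < wdot ω γ).erase β := by
      intro γ hγ
      obtain ⟨hγg', hγt⟩ := Finset.mem_filter.mp hγ
      refine Finset.mem_erase.mpr ⟨fun hγβ => hβg' (hγβ ▸ hγg'), Finset.mem_filter.mpr ⟨?_, hγt⟩⟩
      refine (hg'supp γ hγg').resolve_right fun hlow => ?_
      linarith [hgt β hgβ.mem_support]
    refine ih hg'S hg'α (fun γ hγ => ?_) ?_
    · rcases hg'supp γ hγ with hγg | hlow
      · exact hgt γ hγg
      · linarith [hgt β hgβ.mem_support]
    · have := Finset.card_le_card htop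
      rw [Finset.card_erase_of_mem hβtop] at this
      omega

theorem mem_of_isInitialExponent_of_subduction (hδ : 0 < δ)
    (hlead : ∀ g ∈ S, g ≠ 0 → ∃ β ∈ M, IsInitialExponent ω g β)
    (hlift : ∀ β ∈ M, ∃ h ∈ S, IsInitialExponent ω' h β ∧ HasInitialGap ω δ h β)
    {g : MvPolynomial (Fin n) K} (hg : g ∈ S) (hgα : IsInitialExponent ω' g α) : α ∈ M := by
  have hbands : ∀ N : ℕ, ∀ g ∈ S, IsInitialExponent ω' g α →
      (∀ γ ∈ g.support, wdot ω γ ≤ wdot ω α - δ + N * δ) → α ∈ M := by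
    intro N
    induction N with
    | zero =>
      intro g _ hgα hle
      linarith [hle α hgα.mem_support, show ((0 : ℕ) : ℝ) * δ = 0 by simp]
    | succ N ih =>
      intro g hg hgα hle
      refine mem_of_forall_wdot_le_of_card_le hlead hlift (fun g hg hgα hle => ih g hg hgα ?_)
        _ hg hgα hle le_rfl
      intro γ hγ
      linarith [hle γ hγ, show ((N + 1 : ℕ) : ℝ) * δ = N * δ + δ by push_cast; ring]
  obtain ⟨β, -, hgβ⟩ := hlead g hg hgα.ne_zero
  obtain ⟨N, hN⟩ := Archimedean.arch (wdot ω β - wdot ω α + δ) hδ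
  refine hbands N g hg hgα fun γ hγ => ?_
  rw [nsmul_eq_mul] at hN
  linarith [hgβ.wdot_le hγ]

end Subduction

end

theorem sagbi_invariant_under_equivalent_weight_general {K : Type*} [Field K] {n s : ℕ}
    (ω ω' : Fin n → ℝ) (f : Fin s → MvPolynomial (Fin n) K)
    (hterm : ∀ g ∈ Algebra.adjoin K (Set.range f), g ≠ 0 →
      ((initForm ω g).support).card = 1)
    (heq : ∀ i, initForm ω' (f i) = initForm ω (f i))
    (hsagbi : IsSagbiBasis ω f) :
    IsSagbiBasis ω' f := by
  unfold IsSagbiBasis at hsagbi ⊢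
  obtain ⟨δ, hgap, hδ⟩ :=
    ((eventually_forall_hasInitialGap ω f).and self_mem_nhdsWithin).exists
  have hlift := fun β (hβ : β ∈ AddSubmonoid.closure _) =>
    exists_mem_adjoin_of_mem_closure hδ hgap heq hβ
  have hlead : ∀ g ∈ Algebra.adjoin K (Set.range f), g ≠ 0 →
      ∃ β ∈ AddSubmonoid.closure {α | ∃ i, IsInitialExponent ω (f i) α},
        IsInitialExponent ω g β := fun g hg hg0 => by
    obtain ⟨β, hβ⟩ := Finset.card_eq_one.mp (hterm g hg hg0)
    have hβS : β ∈ {α | ∃ g ∈ Algebra.adjoin K (Set.range f), g ≠ 0 ∧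
        (initForm ω g).support = {α}} := ⟨g, hg, hg0, hβ⟩
    rw [← hsagbi] at hβS
    exact ⟨β, hβS, hβ⟩
  simp only [heq]
  ext α
  constructor
  · intro hα
    obtain ⟨h, hhS, hhα, -⟩ := hlift α hα
    exact ⟨h, hhS, hhα.ne_zero, hhα⟩
  · rintro ⟨g, hg, -, hgα⟩
    exact mem_of_isInitialExponent_of_subduction (S := (Algebra.adjoin K (Set.range f)).toSubmodule)
      (M := AddSubmonoid.closure {α | ∃ i, IsInitialExponent ω (f i) α}) hδ hlead hlift hg hgα

theorem sagbi_invariant_under_equivalent_weight {K : Type*} [Field K] {n s : ℕ}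
    (ω ω' : Fin n → ℝ) (f : Fin s → MvPolynomial (Fin n) K)
    (hf : ∀ i, f i ≠ 0)
    (hmono : ∀ i, ((initForm ω (f i)).support).card = 1)
    (hterm : ∀ g ∈ Algebra.adjoin K (Set.range f), g ≠ 0 →
      ((initForm ω g).support).card = 1)
    (hterm' : ∀ g ∈ Algebra.adjoin K (Set.range f), g ≠ 0 →
      ((initForm ω' g).support).card = 1)
    (heq : ∀ i, initForm ω' (f i) = initForm ω (f i))
    (hsagbi : IsSagbiBasis ω f) :
    IsSagbiBasis ω' f :=
  sagbi_invariant_under_equivalent_weight_general ω ω' f hterm heq hsagbi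
end
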